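/- Let 0 < β < α, c > 0, and set D = [[−α, α], [0, −β]] and ξ = (α/(2α−β), (α−β)/(2α−β)) (the positive right eigenvector of D for its maximal eigenvalue μ = −β, normalized to sum 1). Let λ = (λ₁, λ₂) ∈ ℝ² with λ₁, λ₂ ≥ 0, let u = (u₁, u₂) : [0,∞) → ℝ² be a nonnegative solution of the cumulant system du/dt = D u − (c/2) u ⊙ u with u(0) = λ, and let v : [0,∞) → ℝ² be a differentiable solution of dv/dt = D v − c u ⊙ v with v(0) = ξ. Then lim_{t→∞} e^{β t} v(t) = (1 + (c/(2β)) λ₂)^{−2} · ξ. -/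

import Mathlib

/-!
The second components decouple. `u₂` solves the Riccati equation `u₂' = -β u₂ - (c/2) u₂²`,
so it is the explicit solution `λ₂ e^{-βt} / h(t)` with `h(t) = 1 + (c/(2β)) λ₂ (1 - e^{-βt})`;
since `c u₂ = 2 h'/h`, the equation `v₂' = -(β + c u₂) v₂` then gives `e^{βt} v₂ = ξ₂ / h²`.
For the first components, `u₁' = -(α + (c/2) u₁) u₁ + α u₂` with forcing `α u₂ → 0` forces
`u₁ → 0`, and `w = e^{βt} v₁` solves `w' = -(α - β + c u₁) w + α e^{βt} v₂`, a linear equation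
whose rate tends to `α - β > 0` and whose forcing tends to `α ξ₂ / h(∞)²`; hence
`w → α ξ₂ / ((α - β) h(∞)²) = ξ₁ / h(∞)²`. Both limits of linear equations come from a single
Lyapunov estimate for `f²`, which needs no sign information on `f`.
-/

open Filter Topology Set Real

lemma antitoneOn_Ici_of_hasDerivAt_nonpos {f f' : ℝ → ℝ} {T : ℝ}
    (hf : ∀ t ∈ Ici T, HasDerivAt f (f' t) t) (hf' : ∀ t ∈ Ici T, f' t ≤ 0) :
    AntitoneOn f (Ici T) := by
  refine antitoneOn_of_hasDerivWithinAt_nonpos (f' := f') (convex_Ici T)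
    (fun t ht ↦ (hf t ht).continuousAt.continuousWithinAt) (fun t ht ↦ ?_) fun t ht ↦ ?_
  all_goals rw [interior_Ici] at ht
  · exact (hf t (Ioi_subset_Ici_self ht)).hasDerivWithinAt
  · exact hf' t (Ioi_subset_Ici_self ht)

lemma eq_zero_of_hasDerivAt_eq_neg_mul {y m : ℝ → ℝ}
    (hy : ∀ t ∈ Ici (0 : ℝ), HasDerivAt y (-m t * y t) t) (hm : ∀ t ∈ Ici (0 : ℝ), 0 ≤ m t)
    (hy0 : y 0 = 0) : ∀ t ∈ Ici (0 : ℝ), y t = 0 := by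
  have hanti : AntitoneOn (fun t ↦ y t ^ 2) (Ici 0) :=
    antitoneOn_Ici_of_hasDerivAt_nonpos (fun t ht ↦ (hy t ht).pow 2) fun t ht ↦ by
      have := mul_nonneg (hm t ht) (mul_self_nonneg (y t))
      norm_num
      linarith
  intro t ht
  have h := hanti self_mem_Ici ht ht
  simp only [hy0] at h
  exact (sq_nonpos_iff _).1 (by simpa using h)

lemma le_of_hasDerivAt_le_neg_mul_add {φ φ' : ℝ → ℝ} {a B T : ℝ} (ha : a ≠ 0)
    (hφ : ∀ t ∈ Ici T, HasDerivAt φ (φ' t) t) (hle : ∀ t ∈ Ici T, φ' t ≤ -a * φ t + B) :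
    ∀ t ∈ Ici T, φ t ≤ B / a + (φ T - B / a) * exp (-(a * (t - T))) := by
  have hexp (t : ℝ) : HasDerivAt (fun s ↦ exp (a * (s - T))) (exp (a * (t - T)) * a) t := by
    simpa using (((hasDerivAt_id t).sub_const T).const_mul a).exp
  have hanti : AntitoneOn (fun t ↦ (φ t - B / a) * exp (a * (t - T))) (Ici T) :=
    antitoneOn_Ici_of_hasDerivAt_nonpos (fun t ht ↦ ((hφ t ht).sub_const _).mul (hexp t))
      fun t ht ↦ by
        have key : φ' t * exp (a * (t - T)) + (φ t - B / a) * (exp (a * (t - T)) * a)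
            = (φ' t - (-a * φ t + B)) * exp (a * (t - T)) := by field_simp; ring
        rw [key]
        exact mul_nonpos_of_nonpos_of_nonneg (by linarith [hle t ht]) (exp_pos _).le
  intro t ht
  have h := hanti self_mem_Ici ht ht
  simp only [sub_self, mul_zero, exp_zero, mul_one] at h
  rw [exp_neg, ← div_eq_mul_inv, ← sub_le_iff_le_add', le_div_iff₀ (exp_pos _)]
  exact h

lemma tendsto_exp_neg_mul_sub_atTop {a : ℝ} (ha : 0 < a) (T : ℝ) :
    Tendsto (fun t ↦ exp (-(a * (t - T)))) atTop (𝓝 0) :=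
  tendsto_exp_neg_atTop_nhds_zero.comp <|
    (tendsto_atTop_add_const_right _ (-T) tendsto_id).const_mul_atTop ha

lemma tendsto_zero_of_hasDerivAt_eq_neg_mul_add {f k r : ℝ → ℝ} {a : ℝ} (ha : 0 < a)
    (hk : ∀ᶠ t in atTop, a ≤ k t) (hr : Tendsto r atTop (𝓝 0))
    (hf : ∀ᶠ t in atTop, HasDerivAt f (-k t * f t + r t) t) :
    Tendsto f atTop (𝓝 0) := by
  suffices hsq : Tendsto (fun t ↦ f t ^ 2) atTop (𝓝 0) by
    rw [tendsto_zero_iff_abs_tendsto_zero]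
    simpa [sqrt_sq_eq_abs, Function.comp_def] using hsq.sqrt
  refine tendsto_order.2 ⟨fun ε hε ↦ Eventually.of_forall fun t ↦ hε.trans_le (sq_nonneg _),
    fun ε hε ↦ ?_⟩
  have hr2 : ∀ᶠ t in atTop, r t ^ 2 < a ^ 2 * (ε / 2) := by
    simpa using (hr.pow 2).eventually_lt_const (by norm_num; positivity)
  obtain ⟨T, hT⟩ := eventually_atTop.1 (hk.and (hf.and hr2))
  -- `(f²)' = -2 k f² + 2 f r ≤ -a f² + r² / a`, by `2 f r ≤ a f² + r² / a`
  have hbound := le_of_hasDerivAt_le_neg_mul_add (φ := fun t ↦ f t ^ 2) (B := a * (ε / 2))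
    ha.ne' (fun t ht ↦ (hT t ht).2.1.pow 2) fun t ht ↦ by
      obtain ⟨hkt, -, hrt⟩ := hT t ht
      have h2fr : 2 * f t * r t ≤ a * f t ^ 2 + r t ^ 2 / a := by
        have := sq_nonneg (a * f t - r t)
        rw [← sub_nonneg]
        field_simp
        nlinarith
      have hra : r t ^ 2 / a < a * (ε / 2) := by
        rw [div_lt_iff₀ ha]
        nlinarith
      have hkf : a * f t ^ 2 ≤ k t * f t ^ 2 := mul_le_mul_of_nonneg_right hkt (sq_nonneg _)
      norm_num
      linarith
  have hlim : Tendsto (fun t ↦ a * (ε / 2) / a + (f T ^ 2 - a * (ε / 2) / a) *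
      exp (-(a * (t - T)))) atTop (𝓝 (ε / 2)) := by
    simpa [ha.ne'] using (tendsto_exp_neg_mul_sub_atTop ha T).const_mul (f T ^ 2 - ε / 2)
      |>.const_add (ε / 2)
  filter_upwards [hlim.eventually_lt_const (half_lt_self hε), eventually_ge_atTop T]
    with t hlt ht
  exact (hbound t ht).trans_lt hlt

lemma tendsto_of_hasDerivAt_eq_neg_mul_add {f k g : ℝ → ℝ} {a b : ℝ} (ha : 0 < a)
    (hk : Tendsto k atTop (𝓝 a)) (hg : Tendsto g atTop (𝓝 b))
    (hf : ∀ᶠ t in atTop, HasDerivAt f (-k t * f t + g t) t) :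
    Tendsto f atTop (𝓝 (b / a)) := by
  have hr : Tendsto (fun t ↦ g t - k t * (b / a)) atTop (𝓝 0) := by
    convert hg.sub (hk.mul_const (b / a)) using 2
    field_simp
    ring
  have := tendsto_zero_of_hasDerivAt_eq_neg_mul_add (half_pos ha)
    ((hk.eventually_const_lt (half_lt_self ha)).mono fun _ ↦ le_of_lt) hr
    (hf.mono fun t ht ↦ (ht.sub_const (b / a)).congr_deriv (by ring))
  simpa using this.add_const (b / a)

lemma hasDerivAt_exp_mul (b t : ℝ) :
    HasDerivAt (fun s ↦ exp (b * s)) (b * exp (b * t)) t := by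
  simpa [mul_comm] using ((hasDerivAt_id t).const_mul b).exp

lemma hasDerivAt_exp_neg_mul (b t : ℝ) :
    HasDerivAt (fun s ↦ exp (-(b * s))) (-b * exp (-(b * t))) t := by
  simpa using hasDerivAt_exp_mul (-b) t

noncomputable section

def riccatiDenom (c β l t : ℝ) : ℝ := 1 + c / (2 * β) * l * (1 - exp (-(β * t)))

/-- The solution of `u' = -β u - (c / 2) u ^ 2`, `u 0 = l`. -/
def riccatiSol (c β l t : ℝ) : ℝ := l * exp (-(β * t)) / riccatiDenom c β l t

end

section Riccati

variable {c β l : ℝ}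

lemma hasDerivAt_riccatiDenom (hβ : β ≠ 0) (t : ℝ) :
    HasDerivAt (riccatiDenom c β l) (c / 2 * l * exp (-(β * t))) t := by
  refine (((hasDerivAt_exp_neg_mul β t).const_sub 1).const_mul (c / (2 * β) * l)
    |>.const_add 1).congr_deriv ?_
  field_simp

lemma one_le_riccatiDenom (hβ : 0 < β) (hc : 0 ≤ c) (hl : 0 ≤ l) {t : ℝ} (ht : 0 ≤ t) :
    1 ≤ riccatiDenom c β l t := by
  have : exp (-(β * t)) ≤ 1 := exp_le_one_iff.2 (by nlinarith)
  unfold riccatiDenom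
  nlinarith [mul_nonneg (by positivity : 0 ≤ c / (2 * β) * l) (sub_nonneg.2 this)]

lemma riccatiDenom_pos (hβ : 0 < β) (hc : 0 ≤ c) (hl : 0 ≤ l) {t : ℝ} (ht : 0 ≤ t) :
    0 < riccatiDenom c β l t :=
  one_pos.trans_le (one_le_riccatiDenom hβ hc hl ht)

lemma riccatiSol_nonneg (hβ : 0 < β) (hc : 0 ≤ c) (hl : 0 ≤ l) {t : ℝ} (ht : 0 ≤ t) :
    0 ≤ riccatiSol c β l t :=
  div_nonneg (by positivity) (riccatiDenom_pos hβ hc hl ht).le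

lemma tendsto_riccatiDenom (hβ : 0 < β) :
    Tendsto (riccatiDenom c β l) atTop (𝓝 (1 + c / (2 * β) * l)) := by
  have := tendsto_exp_neg_atTop_nhds_zero.comp (tendsto_id.const_mul_atTop hβ)
  show Tendsto (fun t ↦ 1 + c / (2 * β) * l * (1 - exp (-(β * t)))) _ _
  simpa using ((this.const_sub 1).const_mul (c / (2 * β) * l)).const_add 1

lemma tendsto_riccatiSol (hβ : 0 < β) (hc : 0 ≤ c) (hl : 0 ≤ l) :
    Tendsto (riccatiSol c β l) atTop (𝓝 0) := by
  have hexp := tendsto_exp_neg_atTop_nhds_zero.comp (tendsto_id.const_mul_atTop hβ)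
  have hL : 1 + c / (2 * β) * l ≠ 0 := by positivity
  show Tendsto (fun t ↦ l * exp (-(β * t)) / riccatiDenom c β l t) _ _
  simpa [Pi.div_def] using (hexp.const_mul l).div (tendsto_riccatiDenom hβ) hL

lemma hasDerivAt_riccatiSol (hβ : β ≠ 0) {t : ℝ} (ht : riccatiDenom c β l t ≠ 0) :
    HasDerivAt (riccatiSol c β l)
      (-(β + c / 2 * riccatiSol c β l t) * riccatiSol c β l t) t := by
  refine (((hasDerivAt_exp_neg_mul β t).const_mul l).div (hasDerivAt_riccatiDenom hβ t)
    ht).congr_deriv ?_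
  unfold riccatiSol
  field_simp
  ring

lemma eq_riccatiSol (hβ : 0 < β) (hc : 0 ≤ c) (hl : 0 ≤ l) {u : ℝ → ℝ}
    (hu : ∀ t ∈ Ici (0 : ℝ), HasDerivAt u (-(β + c / 2 * u t) * u t) t)
    (hu_nonneg : ∀ t ∈ Ici (0 : ℝ), 0 ≤ u t) (hu0 : u 0 = l) :
    ∀ t ∈ Ici (0 : ℝ), u t = riccatiSol c β l t := by
  intro t ht
  refine sub_eq_zero.1 <| eq_zero_of_hasDerivAt_eq_neg_mul
    (y := fun t ↦ u t - riccatiSol c β l t) (m := fun t ↦ β + c / 2 * (u t + riccatiSol c β l t))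
    (fun t ht ↦ ?_) (fun t ht ↦ ?_) (by simp [hu0, riccatiSol, riccatiDenom]) t ht
  · exact ((hu t ht).sub (hasDerivAt_riccatiSol hβ.ne'
      (riccatiDenom_pos hβ hc hl ht).ne')).congr_deriv (by ring)
  · have := hu_nonneg t ht
    have := riccatiSol_nonneg hβ hc hl ht
    positivity

lemma eq_of_hasDerivAt_eq_neg_add_mul_riccatiSol (hβ : 0 < β) (hc : 0 ≤ c) (hl : 0 ≤ l)
    {v : ℝ → ℝ} {x : ℝ}
    (hv : ∀ t ∈ Ici (0 : ℝ), HasDerivAt v (-(β + c * riccatiSol c β l t) * v t) t)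
    (hv0 : v 0 = x) :
    ∀ t ∈ Ici (0 : ℝ), v t = x * exp (-(β * t)) / riccatiDenom c β l t ^ 2 := by
  intro t ht
  refine sub_eq_zero.1 <| eq_zero_of_hasDerivAt_eq_neg_mul
    (y := fun t ↦ v t - x * exp (-(β * t)) / riccatiDenom c β l t ^ 2)
    (m := fun t ↦ β + c * riccatiSol c β l t) (fun t ht ↦ ?_)
    (fun t ht ↦ by have := riccatiSol_nonneg hβ hc hl ht; positivity)
    (by simp [hv0, riccatiDenom]) t ht
  have hden := (riccatiDenom_pos hβ hc hl ht).ne'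
  refine ((hv t ht).sub ((((hasDerivAt_exp_neg_mul β t).const_mul x).div
    ((hasDerivAt_riccatiDenom hβ.ne' t).pow 2) (pow_ne_zero 2 hden)))).congr_deriv ?_
  simp only [riccatiSol, Pi.pow_apply]
  field_simp
  ring

lemma tendsto_exp_mul_of_hasDerivAt_eq_neg_add_mul_riccatiSol (hβ : 0 < β) (hc : 0 ≤ c)
    (hl : 0 ≤ l) {v : ℝ → ℝ} {x : ℝ}
    (hv : ∀ t ∈ Ici (0 : ℝ), HasDerivAt v (-(β + c * riccatiSol c β l t) * v t) t)
    (hv0 : v 0 = x) :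
    Tendsto (fun t ↦ exp (β * t) * v t) atTop (𝓝 (x / (1 + c / (2 * β) * l) ^ 2)) := by
  have hL : 1 + c / (2 * β) * l ≠ 0 := by positivity
  refine (tendsto_const_nhds.div ((tendsto_riccatiDenom hβ).pow 2) (pow_ne_zero 2 hL)).congr' ?_
  filter_upwards [eventually_ge_atTop 0] with t ht
  rw [Pi.div_apply, eq_of_hasDerivAt_eq_neg_add_mul_riccatiSol hβ hc hl hv hv0 t ht, exp_neg]
  field_simp

end Riccati

lemma hasDerivAt_components {α β s t : ℝ} {w : ℝ → Fin 2 → ℝ} {y : Fin 2 → ℝ}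
    (h : HasDerivAt w (Matrix.mulVec !![-α, α; 0, -β] (w t) - s • (y * w t)) t) :
    HasDerivAt (fun r ↦ w r 0) (-(α + s * y 0) * w t 0 + α * w t 1) t ∧
      HasDerivAt (fun r ↦ w r 1) (-(β + s * y 1) * w t 1) t := by
  constructor <;> refine (hasDerivAt_pi.1 h _).congr_deriv ?_ <;>
    simp [dotProduct, Fin.sum_univ_two] <;> ring

lemma tendsto_zero_of_hasDerivAt_eq_neg_add_mul_self {u₁ u₂ : ℝ → ℝ} {α c : ℝ} (hα : 0 < α)
    (hc : 0 ≤ c) (hu₁ : ∀ t ∈ Ici (0 : ℝ), HasDerivAt u₁ (-(α + c * u₁ t) * u₁ t + α * u₂ t) t)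
    (hu₁_nonneg : ∀ t ∈ Ici (0 : ℝ), 0 ≤ u₁ t) (hu₂ : Tendsto u₂ atTop (𝓝 0)) :
    Tendsto u₁ atTop (𝓝 0) := by
  refine tendsto_zero_of_hasDerivAt_eq_neg_mul_add hα (k := fun t ↦ α + c * u₁ t) ?_
    (by simpa using hu₂.const_mul α) ?_
  · filter_upwards [eventually_ge_atTop 0] with t ht
    have := hu₁_nonneg t ht
    simp only [le_add_iff_nonneg_right]
    positivity
  · filter_upwards [eventually_ge_atTop 0] with t ht using hu₁ t ht

lemma tendsto_exp_mul_of_hasDerivAt_eq_neg_mul_add {v₁ v₂ u₁ : ℝ → ℝ} {α β c b : ℝ} (hβα : β < α)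
    (hv₁ : ∀ t ∈ Ici (0 : ℝ), HasDerivAt v₁ (-(α + c * u₁ t) * v₁ t + α * v₂ t) t)
    (hu₁ : Tendsto u₁ atTop (𝓝 0)) (hv₂ : Tendsto (fun t ↦ exp (β * t) * v₂ t) atTop (𝓝 b)) :
    Tendsto (fun t ↦ exp (β * t) * v₁ t) atTop (𝓝 (α * b / (α - β))) := by
  refine tendsto_of_hasDerivAt_eq_neg_mul_add (sub_pos.2 hβα) (k := fun t ↦ α - β + c * u₁ t)
    (by simpa using (hu₁.const_mul c).const_add (α - β)) (hv₂.const_mul α) ?_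
  filter_upwards [eventually_ge_atTop 0] with t ht
  exact ((hasDerivAt_exp_mul β t).mul (hv₁ t ht)).congr_deriv (by ring)

/-- (From the proof of Proposition 4.6 of the paper, case `β < α`.)
For the two-type subcritical model with `D = [[−α, α], [0, −β]]`, `0 < β < α`, and
`ξ = (α/(2α−β), (α−β)/(2α−β))` the normalized positive right eigenvector for
`μ = −β`, if `u` is a nonnegative solution of the cumulant system with
`u(0) = λ ≥ 0` and `v` solves `dv/dt = D v − c u ⊙ v`, `v(0) = ξ`, then
`lim_{t→∞} e^{βt} v(t) = (1 + (c/(2β)) λ₂)^{−2} ξ`. -/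
theorem stmt19 (α β c : ℝ) (hβ : 0 < β) (hβα : β < α) (hc : 0 < c)
    (D : Matrix (Fin 2) (Fin 2) ℝ) (hD : D = !![-α, α; 0, -β])
    (ξ : Fin 2 → ℝ) (hξ : ξ = ![α / (2 * α - β), (α - β) / (2 * α - β)])
    (lam : Fin 2 → ℝ) (hlam : ∀ i, 0 ≤ lam i)
    (u : ℝ → Fin 2 → ℝ)
    (husol : ∀ t ∈ Set.Ici (0 : ℝ),
      HasDerivAt u (D.mulVec (u t) - (c / 2) • (u t * u t)) t)
    (hunonneg : ∀ t ∈ Set.Ici (0 : ℝ), ∀ i : Fin 2, 0 ≤ u t i)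
    (huinit : u 0 = lam)
    (v : ℝ → Fin 2 → ℝ)
    (hvsol : ∀ t ∈ Set.Ici (0 : ℝ),
      HasDerivAt v (D.mulVec (v t) - c • (u t * v t)) t)
    (hvinit : v 0 = ξ) :
    Tendsto (fun t : ℝ => Real.exp (β * t) • v t) atTop
      (𝓝 (((1 + c / (2 * β) * lam 1) ^ (-2 : ℤ)) • ξ)) := by
  subst hD
  have hu t (ht : t ∈ Ici (0 : ℝ)) := hasDerivAt_components (husol t ht)
  have hv t (ht : t ∈ Ici (0 : ℝ)) := hasDerivAt_components (hvsol t ht)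
  have hu₂ : ∀ t ∈ Ici (0 : ℝ), u t 1 = riccatiSol c β (lam 1) t :=
    eq_riccatiSol hβ hc.le (hlam 1) (fun t ht ↦ (hu t ht).2) (fun t ht ↦ hunonneg t ht 1)
      (by simp [huinit])
  have hw₂ := tendsto_exp_mul_of_hasDerivAt_eq_neg_add_mul_riccatiSol hβ hc.le (hlam 1)
    (fun t ht ↦ hu₂ t ht ▸ (hv t ht).2) (congrFun hvinit 1)
  have hu₁ : Tendsto (fun t ↦ u t 0) atTop (𝓝 0) :=
    tendsto_zero_of_hasDerivAt_eq_neg_add_mul_self (by linarith) (by positivity)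
      (fun t ht ↦ (hu t ht).1) (fun t ht ↦ hunonneg t ht 0)
      ((tendsto_riccatiSol hβ hc.le (hlam 1)).congr' <| (eventually_ge_atTop 0).mono
        fun t ht ↦ (hu₂ t ht).symm)
  have hw₁ := tendsto_exp_mul_of_hasDerivAt_eq_neg_mul_add hβα (fun t ht ↦ (hv t ht).1) hu₁ hw₂
  have hL : 0 < 1 + c / (2 * β) * lam 1 := by have := hlam 1; positivity
  have hαβ : α - β ≠ 0 := by linarith
  have h2αβ : 2 * α - β ≠ 0 := by linarith
  simp only [tendsto_pi_nhds, Fin.forall_fin_two, Pi.smul_apply, smul_eq_mul]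
  subst hξ
  constructor
  · convert hw₁ using 2
    simp
    field_simp
  · convert hw₂ using 2
    simp
    field_simp
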